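/- arXiv:2012.00324 — 5 statements merged into one kernel-verified Lean document; each statement's English description precedes it below -/
import Mathlib

section
/- Let 0 < η < 1, 0 < θ ≤ 1, and let ω : (0,1] → [0,∞) be nondecreasing with ∫_0^1 ω(ρ)/ρ dρ < ∞. Define A_0 = 1 and A_m = max(ω(η^m), η^θ·A_{m−1}) for m ≥ 1. Then there is a constant C depending only on η and θ such that A_m ≤ C·η^{mθ}·∫_{η^m}^1 ω(ρ)/ρ^{1+θ} dρ + η^{mθ} for all m ≥ 1. -/
open MeasureTheory Finset Set

/-!
Unrolling the recursion gives `A_m ≤ η^{mθ} (1 + ∑_{j=1}^m ω(η^j) / η^{jθ})`. Since `ω` is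
nondecreasing, `ω ≥ ω(η^j)` on `[η^j, η^{j-1}]`, where `∫ ρ^{-1-θ} dρ = (1 - η^θ) / (θ η^{jθ})`;
so each term of the sum is at most `θ / (1 - η^θ)` times the integral of `ω(ρ)/ρ^{1+θ}` over
that interval, and these intervals tile `[η^m, 1]`.
-/

lemma le_pow_mul_one_add_sum_div_pow {q : ℝ} (hq : 0 < q) {b A : ℕ → ℝ} (hb : ∀ n, 0 ≤ b n)
    (hA0 : A 0 ≤ 1) (hA : ∀ n, A (n + 1) ≤ max (b (n + 1)) (q * A n)) (n : ℕ) :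
    A n ≤ q ^ n * (1 + ∑ i ∈ range n, b (i + 1) / q ^ (i + 1)) := by
  induction n with
  | zero => simpa using hA0
  | succ n ih =>
    have hqn : 0 < q ^ (n + 1) := pow_pos hq _
    refine (hA n).trans ?_
    rw [sum_range_succ, mul_add, mul_add, mul_div_cancel₀ _ hqn.ne']
    set S := ∑ i ∈ range n, b (i + 1) / q ^ (i + 1)
    have hS : 0 ≤ q ^ (n + 1) * S :=
      mul_nonneg hqn.le (sum_nonneg fun i _ => div_nonneg (hb _) (pow_pos hq _).le)
    have hbn := hb (n + 1)
    refine max_le ?_ ?_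
    · linarith
    · calc q * A n ≤ q * (q ^ n * (1 + S)) := mul_le_mul_of_nonneg_left ih hq.le
        _ = q ^ (n + 1) * 1 + q ^ (n + 1) * S := by ring
        _ ≤ _ := by linarith

lemma MonotoneOn.intervalIntegrable_div_rpow {ω : ℝ → ℝ} {a b : ℝ} (s : ℝ) (ha : 0 < a)
    (hab : a ≤ b) (hω : MonotoneOn ω (Icc a b)) :
    IntervalIntegrable (fun ρ => ω ρ / ρ ^ s) volume a b := by
  have hpos : ∀ ρ ∈ uIcc a b, 0 < ρ := fun ρ hρ => ha.trans_le (uIcc_of_le hab ▸ hρ).1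
  simp_rw [div_eq_mul_inv]
  refine (MonotoneOn.intervalIntegrable (uIcc_of_le hab ▸ hω)).mul_continuousOn ?_
  exact (continuousOn_id.rpow_const fun ρ hρ => Or.inl (hpos ρ hρ).ne').inv₀
    fun ρ hρ => (Real.rpow_pos_of_pos (hpos ρ hρ) s).ne'

lemma MonotoneOn.mul_integral_rpow_le {ω : ℝ → ℝ} {a b θ : ℝ} (ha : 0 < a) (hab : a ≤ b)
    (hθ : 0 < θ) (hω : MonotoneOn ω (Icc a b)) :
    ω a * ((a ^ (-θ) - b ^ (-θ)) / θ) ≤ ∫ ρ in a..b, ω ρ / ρ ^ (1 + θ) := by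
  have h0 : (0 : ℝ) ∉ uIcc a b := fun h => by linarith [(uIcc_of_le hab ▸ h).1]
  have hpow : ∫ ρ in a..b, ρ ^ (-(1 + θ)) = (a ^ (-θ) - b ^ (-θ)) / θ := by
    rw [integral_rpow (Or.inr ⟨by linarith, h0⟩), show -(1 + θ) + 1 = -θ by ring,
      div_neg, ← neg_div, neg_sub]
  rw [← hpow, ← intervalIntegral.integral_const_mul]
  refine intervalIntegral.integral_mono_on hab
    ((intervalIntegral.intervalIntegrable_rpow (Or.inr h0)).const_mul _)
    (hω.intervalIntegrable_div_rpow _ ha hab) fun ρ hρ => ?_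
  have hρ0 : 0 < ρ := ha.trans_le hρ.1
  rw [Real.rpow_neg hρ0.le, ← div_eq_mul_inv]
  exact div_le_div_of_nonneg_right (hω (left_mem_Icc.2 hab) hρ hρ.1)
    (Real.rpow_nonneg hρ0.le _)

lemma MonotoneOn.div_rpow_pow_le_integral {ω : ℝ → ℝ} {η θ : ℝ} (hη : 0 < η) (hη1 : η < 1)
    (hθ : 0 < θ) (hω : MonotoneOn ω (Ioc 0 1)) (j : ℕ) :
    ω (η ^ (j + 1)) / (η ^ θ) ^ (j + 1)
      ≤ θ / (1 - η ^ θ) * ∫ ρ in η ^ (j + 1)..η ^ j, ω ρ / ρ ^ (1 + θ) := by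
  have hq1 : η ^ θ < 1 := Real.rpow_lt_one hη.le hη1 hθ
  have hq1' : 1 - η ^ θ ≠ 0 := by linarith
  have hsub : Icc (η ^ (j + 1)) (η ^ j) ⊆ Ioc 0 1 :=
    Icc_subset_Ioc (pow_pos hη _) (pow_le_one₀ hη.le hη1.le)
  have hbound := (hω.mono hsub).mul_integral_rpow_le (pow_pos hη _)
    (pow_le_pow_of_le_one hη.le hη1.le (j.le_add_right 1)) hθ
  rw [Real.rpow_neg (pow_nonneg hη.le _), Real.rpow_neg (pow_nonneg hη.le _),
    ← Real.rpow_pow_comm hη.le, ← Real.rpow_pow_comm hη.le] at hbound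
  calc ω (η ^ (j + 1)) / (η ^ θ) ^ (j + 1)
      = θ / (1 - η ^ θ) *
          (ω (η ^ (j + 1)) * ((((η ^ θ) ^ (j + 1))⁻¹ - ((η ^ θ) ^ j)⁻¹) / θ)) := by
        field_simp
        ring
    _ ≤ _ := mul_le_mul_of_nonneg_left hbound (div_nonneg hθ.le (sub_nonneg.2 hq1.le))

lemma MonotoneOn.sum_div_rpow_pow_le_integral {ω : ℝ → ℝ} {η θ : ℝ} (hη : 0 < η) (hη1 : η < 1)
    (hθ : 0 < θ) (hω : MonotoneOn ω (Ioc 0 1)) (m : ℕ) :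
    ∑ j ∈ range m, ω (η ^ (j + 1)) / (η ^ θ) ^ (j + 1)
      ≤ θ / (1 - η ^ θ) * ∫ ρ in η ^ m..1, ω ρ / ρ ^ (1 + θ) := by
  have hint : ∀ k < m,
      IntervalIntegrable (fun ρ => ω ρ / ρ ^ (1 + θ)) volume (η ^ k) (η ^ (k + 1)) := fun k _ =>
    have hsub := Icc_subset_Ioc (pow_pos hη (k + 1)) (pow_le_one₀ (n := k) hη.le hη1.le)
    ((hω.mono hsub).intervalIntegrable_div_rpow _ (pow_pos hη _)
      (pow_le_pow_of_le_one hη.le hη1.le (k.le_add_right 1))).symm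
  have hsplit : ∫ ρ in η ^ m..1, ω ρ / ρ ^ (1 + θ)
      = ∑ j ∈ range m, ∫ ρ in η ^ (j + 1)..η ^ j, ω ρ / ρ ^ (1 + θ) := by
    have hsum := intervalIntegral.sum_integral_adjacent_intervals hint
    rw [pow_zero] at hsum
    rw [intervalIntegral.integral_symm, ← hsum, ← sum_neg_distrib]
    simp only [intervalIntegral.integral_symm (η ^ (_ + 1)), neg_neg]
  rw [hsplit, mul_sum]
  exact sum_le_sum fun j _ => hω.div_rpow_pow_le_integral hη hη1 hθ j

theorem dini_recursion_integral_bound_general (η θ : ℝ)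
    (hη : 0 < η) (hη1 : η < 1) (hθ : 0 < θ) :
    ∃ C > 0, ∀ (ω : ℝ → ℝ),
      (∀ r : ℝ, 0 < r → r ≤ 1 → 0 ≤ ω r) →
      (∀ r s : ℝ, 0 < r → r ≤ s → s ≤ 1 → ω r ≤ ω s) →
      IntegrableOn (fun ρ : ℝ => ω ρ / ρ) (Set.Ioc 0 1) →
      ∀ (A : ℕ → ℝ), A 0 = 1 →
      (∀ m : ℕ, 1 ≤ m → A m = max (ω (η ^ m)) (η ^ θ * A (m - 1))) →
      ∀ m : ℕ, 1 ≤ m →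
        A m ≤ C * η ^ ((m : ℝ) * θ) * (∫ ρ in Set.Ioc (η ^ m) (1 : ℝ), ω ρ / ρ ^ (1 + θ))
          + η ^ ((m : ℝ) * θ) := by
  refine ⟨θ / (1 - η ^ θ), div_pos hθ (sub_pos.2 (Real.rpow_lt_one hη.le hη1 hθ)), ?_⟩
  intro ω hω0 hωmono _ A hA0 hA m _
  have hω : MonotoneOn ω (Ioc 0 1) := fun r hr s hs hrs => hωmono r s hr.1 hrs hs.2
  have hrec := le_pow_mul_one_add_sum_div_pow (Real.rpow_pos_of_pos hη θ) (b := fun n => ω (η ^ n))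
    (fun n => hω0 _ (pow_pos hη n) (pow_le_one₀ hη.le hη1.le)) hA0.le
    (fun n => by simpa using (hA (n + 1) n.succ_pos).le) m
  rw [mul_comm (m : ℝ), Real.rpow_mul_natCast hη.le,
    ← intervalIntegral.integral_of_le (pow_le_one₀ hη.le hη1.le)]
  calc A m ≤ (η ^ θ) ^ m * (1 + ∑ j ∈ range m, ω (η ^ (j + 1)) / (η ^ θ) ^ (j + 1)) := hrec
    _ ≤ (η ^ θ) ^ m * (1 + θ / (1 - η ^ θ) * ∫ ρ in η ^ m..1, ω ρ / ρ ^ (1 + θ)) := by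
      gcongr
      exact hω.sum_div_rpow_pow_le_integral hη hη1 hθ m
    _ = _ := by ring

/-- For the Dini recursion `A_0 = 1`, `A_m = max(ω(η^m), η^θ A_{m−1})`, there is a constant `C`
depending only on `η` and `θ` such that
`A_m ≤ C η^{mθ} ∫_{η^m}^1 ω(ρ)/ρ^{1+θ} dρ + η^{mθ}` for all `m ≥ 1`. -/
theorem dini_recursion_integral_bound (η θ : ℝ)
    (hη : 0 < η) (hη1 : η < 1) (hθ : 0 < θ) (hθ1 : θ ≤ 1) :
    ∃ C > 0, ∀ (ω : ℝ → ℝ),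
      (∀ r : ℝ, 0 < r → r ≤ 1 → 0 ≤ ω r) →
      (∀ r s : ℝ, 0 < r → r ≤ s → s ≤ 1 → ω r ≤ ω s) →
      IntegrableOn (fun ρ : ℝ => ω ρ / ρ) (Set.Ioc 0 1) →
      ∀ (A : ℕ → ℝ), A 0 = 1 →
      (∀ m : ℕ, 1 ≤ m → A m = max (ω (η ^ m)) (η ^ θ * A (m - 1))) →
      ∀ m : ℕ, 1 ≤ m →
        A m ≤ C * η ^ ((m : ℝ) * θ) * (∫ ρ in Set.Ioc (η ^ m) (1 : ℝ), ω ρ / ρ ^ (1 + θ))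
          + η ^ ((m : ℝ) * θ) :=
  dini_recursion_integral_bound_general η θ hη hη1 hθ
end

section
/- Let 0 < η < 1, 0 < θ ≤ 1, and let ω : (0,1] → [0,∞) be nondecreasing with ∫_0^1 ω(ρ)/ρ dρ < ∞. Define A_0 = A_{−1} = 1 and A_m = max(ω(η^m), η^θ·A_{m−1}) for m ≥ 1. Then Σ_{m=0}^∞ A_m < ∞, A_m → 0 as m → ∞, and for every m ≥ 1, Σ_{i=m}^∞ A_i ≤ (1/((1−η^θ)(1−η)))·(∫_0^{η^{m−1}} ω(ρ)/ρ dρ + A_{m−1}). -/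
/-!
Since `A_{i+1} ≤ ω(η^{i+1}) + η^θ A_i`, summing over `i` and absorbing the geometric factor
bounds `(1 - η^θ) Σ_{i ≥ m} A_i` by `Σ_{i ≥ m} ω(η^i) + A_{m-1}`. Monotonicity of `ω` gives
`ω(η^{i+1}) (1 - η) ≤ ∫_{η^{i+1}}^{η^i} ω(ρ)/ρ dρ`, and these annuli tile `(0, η^{m-1}]`.
-/

open MeasureTheory Filter Set

open Finset in
theorem one_sub_mul_sum_range_succ_le {a b : ℕ → ℝ} {q : ℝ} (ha : ∀ i, 0 ≤ a i) (hq : 0 ≤ q)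
    (hstep : ∀ i, a (i + 1) ≤ b i + q * a i) (n : ℕ) :
    (1 - q) * ∑ i ∈ range n, a (i + 1) ≤ ∑ i ∈ range n, b i + q * a 0 := by
  have hsum : ∑ i ∈ range n, a (i + 1) ≤ ∑ i ∈ range n, b i + q * ∑ i ∈ range n, a i := by
    rw [mul_sum, ← sum_add_distrib]
    exact sum_le_sum fun i _ => hstep i
  have hshift : ∑ i ∈ range n, a i ≤ ∑ i ∈ range n, a (i + 1) + a 0 := by
    rw [← sum_range_succ' a n, sum_range_succ]
    exact le_add_of_nonneg_right (ha n)
  linarith [mul_le_mul_of_nonneg_left hshift hq]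

theorem mul_one_sub_le_setIntegral_Ioc {ω : ℝ → ℝ} {η r : ℝ} (hr : 0 < r) (hη : 0 < η)
    (hη1 : η ≤ 1) (hmono : MonotoneOn ω (Icc (η * r) r)) (hnn : 0 ≤ ω (η * r))
    (hint : IntegrableOn (fun ρ => ω ρ / ρ) (Ioc (η * r) r)) :
    ω (η * r) * (1 - η) ≤ ∫ ρ in Ioc (η * r) r, ω ρ / ρ := by
  have hηr : η * r ≤ r := mul_le_of_le_one_left hr.le hη1
  have hpoint : ∀ ρ ∈ Ioc (η * r) r, ω (η * r) / r ≤ ω ρ / ρ := fun ρ hρ => by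
    have hωρ : ω (η * r) ≤ ω ρ := hmono ⟨le_rfl, hηr⟩ (Ioc_subset_Icc_self hρ) hρ.1.le
    exact div_le_div₀ (hnn.trans hωρ) hωρ ((mul_pos hη hr).trans hρ.1) hρ.2
  calc ω (η * r) * (1 - η) = ∫ _ in Ioc (η * r) r, ω (η * r) / r := by
        rw [setIntegral_const, measureReal_def, Real.volume_Ioc,
          ENNReal.toReal_ofReal (sub_nonneg.2 hηr), smul_eq_mul]
        field_simp
    _ ≤ ∫ ρ in Ioc (η * r) r, ω ρ / ρ :=
        setIntegral_mono_on (integrableOn_const (by simp)) hint measurableSet_Ioc hpoint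

theorem setIntegral_Ioc_zero_eq_add {f : ℝ → ℝ} {a b : ℝ} (ha : 0 ≤ a) (hab : a ≤ b)
    (hint : IntegrableOn f (Ioc 0 b)) :
    ∫ ρ in Ioc 0 b, f ρ = (∫ ρ in Ioc 0 a, f ρ) + ∫ ρ in Ioc a b, f ρ := by
  rw [← Ioc_union_Ioc_eq_Ioc ha hab, setIntegral_union (Ioc_disjoint_Ioc_of_le le_rfl)
    measurableSet_Ioc (hint.mono_set (Ioc_subset_Ioc_right hab))
    (hint.mono_set (Ioc_subset_Ioc_left ha))]

theorem sum_mul_one_sub_le_setIntegral_Ioc_zero {ω : ℝ → ℝ} {η : ℝ} (hη : 0 < η) (hη1 : η < 1)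
    (hmono : MonotoneOn ω (Ioc 0 1)) (hnn : ∀ ρ ∈ Ioc (0 : ℝ) 1, 0 ≤ ω ρ)
    (hint : IntegrableOn (fun ρ => ω ρ / ρ) (Ioc 0 1)) {r : ℝ} (hr : 0 < r) (hr1 : r ≤ 1)
    (n : ℕ) :
    (∑ i ∈ Finset.range n, ω (η ^ (i + 1) * r)) * (1 - η) ≤ ∫ ρ in Ioc 0 r, ω ρ / ρ := by
  induction n generalizing r with
  | zero =>
    simpa using setIntegral_nonneg measurableSet_Ioc fun ρ hρ =>
      div_nonneg (hnn ρ ⟨hρ.1, hρ.2.trans hr1⟩) hρ.1.le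
  | succ n ih =>
    have hηr : η * r ≤ r := mul_le_of_le_one_left hr.le hη1.le
    have hintr : IntegrableOn (fun ρ => ω ρ / ρ) (Ioc 0 r) :=
      hint.mono_set (Ioc_subset_Ioc_right hr1)
    have hannulus := mul_one_sub_le_setIntegral_Ioc hr hη hη1.le
      (hmono.mono fun ρ hρ => ⟨(mul_pos hη hr).trans_le hρ.1, hρ.2.trans hr1⟩)
      (hnn _ ⟨mul_pos hη hr, hηr.trans hr1⟩) (hintr.mono_set (Ioc_subset_Ioc_left (by positivity)))
    have hshift : ∑ i ∈ Finset.range n, ω (η ^ (i + 1 + 1) * r) =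
        ∑ i ∈ Finset.range n, ω (η ^ (i + 1) * (η * r)) :=
      Finset.sum_congr rfl fun i _ => by rw [pow_succ, mul_assoc]
    rw [Finset.sum_range_succ', hshift, pow_one, add_mul,
      setIntegral_Ioc_zero_eq_add (by positivity) hηr hintr]
    linarith [ih (mul_pos hη hr) (hηr.trans hr1)]

theorem sum_range_tail_le_of_le_add_mul {ω : ℝ → ℝ} {η q : ℝ} {A : ℕ → ℝ} (hη : 0 < η)
    (hη1 : η < 1) (hq0 : 0 ≤ q) (hq1 : q < 1) (hmono : MonotoneOn ω (Ioc 0 1))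
    (hnn : ∀ ρ ∈ Ioc (0 : ℝ) 1, 0 ≤ ω ρ) (hint : IntegrableOn (fun ρ => ω ρ / ρ) (Ioc 0 1))
    (hA : ∀ m, 0 ≤ A m) (hstep : ∀ m, A (m + 1) ≤ ω (η ^ (m + 1)) + q * A m) (k n : ℕ) :
    ∑ i ∈ Finset.range n, A (k + 1 + i) ≤
      1 / ((1 - q) * (1 - η)) * ((∫ ρ in Ioc 0 (η ^ k), ω ρ / ρ) + A k) := by
  have hrec : (1 - q) * ∑ i ∈ Finset.range n, A (k + 1 + i) ≤
      ∑ i ∈ Finset.range n, ω (η ^ (i + 1) * η ^ k) + q * A k := by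
    have := one_sub_mul_sum_range_succ_le (a := fun i => A (k + i))
      (b := fun i => ω (η ^ (i + 1) * η ^ k)) (fun i => hA _) hq0
      (fun i => by simpa only [← pow_add, ← add_assoc, add_right_comm i 1 k, add_comm i k]
        using hstep (k + i)) n
    simpa only [add_zero, add_assoc, Nat.add_comm 1] using this
  have hdini := sum_mul_one_sub_le_setIntegral_Ioc_zero hη hη1 hmono hnn hint
    (pow_pos hη k) (pow_le_one₀ hη.le hη1.le) n
  rw [one_div_mul_eq_div, le_div_iff₀ (mul_pos (sub_pos.2 hq1) (sub_pos.2 hη1))]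
  have hrec' := mul_le_mul_of_nonneg_right hrec (sub_nonneg.2 hη1.le)
  have hAk : 0 ≤ A k * (1 - q * (1 - η)) := mul_nonneg (hA k) (by nlinarith)
  linarith

theorem dini_recursion_tail_sum_general (η θ : ℝ)
    (hη : 0 < η) (hη1 : η < 1) (hθ : 0 < θ)
    (ω : ℝ → ℝ)
    (hωnn : ∀ r : ℝ, 0 < r → r ≤ 1 → 0 ≤ ω r)
    (hωmono : ∀ r s : ℝ, 0 < r → r ≤ s → s ≤ 1 → ω r ≤ ω s)
    (hωdini : IntegrableOn (fun ρ : ℝ => ω ρ / ρ) (Set.Ioc 0 1))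
    (A : ℕ → ℝ) (hA0 : A 0 = 1)
    (hA : ∀ m : ℕ, 1 ≤ m → A m = max (ω (η ^ m)) (η ^ θ * A (m - 1))) :
    Summable A ∧ Tendsto A atTop (nhds 0) ∧
    ∀ m : ℕ, 1 ≤ m →
      (∑' i : ℕ, A (m + i)) ≤
        (1 / ((1 - η ^ θ) * (1 - η))) *
          ((∫ ρ in Set.Ioc (0 : ℝ) (η ^ (m - 1)), ω ρ / ρ) + A (m - 1)) := by
  have hq0 : 0 ≤ η ^ θ := Real.rpow_nonneg hη.le θ
  have hq1 : η ^ θ < 1 := Real.rpow_lt_one hη.le hη1 hθ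
  have hωpow (m : ℕ) : 0 ≤ ω (η ^ m) := hωnn _ (pow_pos hη m) (pow_le_one₀ hη.le hη1.le)
  have hAnn : ∀ m, 0 ≤ A m := by
    rintro (_ | m)
    · simp [hA0]
    · rw [hA _ m.succ_pos]
      exact (hωpow _).trans (le_max_left _ _)
  have hstep (m : ℕ) : A (m + 1) ≤ ω (η ^ (m + 1)) + η ^ θ * A m := by
    rw [hA (m + 1) m.succ_pos, Nat.add_sub_cancel]
    exact max_le_add_of_nonneg (hωpow _) (mul_nonneg hq0 (hAnn m))
  have hpartial := sum_range_tail_le_of_le_add_mul hη hη1 hq0 hq1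
    (fun r hr s hs hrs => hωmono r s hr.1 hrs hs.2) (fun r hr => hωnn r hr.1 hr.2) hωdini
    hAnn hstep
  have hsum : Summable A := (summable_nat_add_iff 1).1 <|
    summable_of_sum_range_le (fun i => hAnn _) fun n => by
      simpa only [zero_add, add_comm 1] using hpartial 0 n
  refine ⟨hsum, hsum.tendsto_atTop_zero, ?_⟩
  rintro (_ | k) hk
  · omega
  rw [Nat.add_sub_cancel]
  exact ((summable_nat_add_iff (k + 1)).2 hsum).congr (fun i => by rw [add_comm])
    |>.tsum_le_of_sum_range_le (hpartial k)

/-- Tail-sum estimate for the Dini recursion: with `A_0 = 1`,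
`A_m = max(ω(η^m), η^θ A_{m−1})`, the series `Σ A_m` converges, `A_m → 0`, and for `m ≥ 1`,
`Σ_{i=m}^∞ A_i ≤ (1/((1−η^θ)(1−η))) (∫_0^{η^{m−1}} ω(ρ)/ρ dρ + A_{m−1})`. -/
theorem dini_recursion_tail_sum (η θ : ℝ)
    (hη : 0 < η) (hη1 : η < 1) (hθ : 0 < θ) (hθ1 : θ ≤ 1)
    (ω : ℝ → ℝ)
    (hωnn : ∀ r : ℝ, 0 < r → r ≤ 1 → 0 ≤ ω r)
    (hωmono : ∀ r s : ℝ, 0 < r → r ≤ s → s ≤ 1 → ω r ≤ ω s)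
    (hωdini : IntegrableOn (fun ρ : ℝ => ω ρ / ρ) (Set.Ioc 0 1))
    (A : ℕ → ℝ) (hA0 : A 0 = 1)
    (hA : ∀ m : ℕ, 1 ≤ m → A m = max (ω (η ^ m)) (η ^ θ * A (m - 1))) :
    Summable A ∧ Tendsto A atTop (nhds 0) ∧
    ∀ m : ℕ, 1 ≤ m →
      (∑' i : ℕ, A (m + i)) ≤
        (1 / ((1 - η ^ θ) * (1 - η))) *
          ((∫ ρ in Set.Ioc (0 : ℝ) (η ^ (m - 1)), ω ρ / ρ) + A (m - 1)) :=
  dini_recursion_tail_sum_general η θ hη hη1 hθ ω hωnn hωmono hωdini A hA0 hA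
end

section
/- Let 0 < η < 1, C̃ > 0, let u : Ω → ℝ with 0 ∈ Ω̄, and suppose there exist quadratic polynomials Q_m (m ≥ 0, Q_0 ≡ 0) such that sup_{Ω ∩ B_{η^m}} |u − Q_m| ≤ η^{2m} and ‖Q_m − Q_{m−1}‖ ≤ C̃ for all m ≥ 1 (so that ‖Q_m‖ ≤ m·C̃). Then there is a constant C depending only on η and C̃ such that |u(x)| ≤ C·|x|²·|ln|x|| for all x ∈ Ω ∩ B_{1/2}. -/
open Metric

lemma coord_le_norm {n : ℕ} (x : EuclideanSpace ℝ (Fin n)) (i : Fin n) : |x i| ≤ ‖x‖ := by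
  rw [EuclideanSpace.norm_eq]
  have h : |x i| = Real.sqrt (|x i| ^ 2) := by rw [Real.sqrt_sq (abs_nonneg _)]
  rw [h]
  apply Real.sqrt_le_sqrt
  simpa using Finset.single_le_sum (f := fun j => |x j| ^ 2)
    (fun j _ => sq_nonneg _) (Finset.mem_univ i)

/-- From dyadic approximation by quadratic polynomials `Q_m` (2-forms, `Q_0 ≡ 0`) with
`sup_{Ω ∩ B_{η^m}} |u − Q_m| ≤ η^{2m}` and bounded coefficient increments
`‖Q_m − Q_{m−1}‖ ≤ C̃`, one gets the ln-Lipschitz bound `|u(x)| ≤ C |x|² |ln |x||` on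
`Ω ∩ B_{1/2}`, with `C` depending only on `η` and `C̃`. -/
theorem dyadic_bounded_increments_lnL (η Ct : ℝ)
    (hη : 0 < η) (hη1 : η < 1) (hCt : 0 < Ct) :
    ∃ C > 0, ∀ (n : ℕ) (Ω : Set (EuclideanSpace ℝ (Fin n)))
      (u : EuclideanSpace ℝ (Fin n) → ℝ) (A : ℕ → Matrix (Fin n) (Fin n) ℝ),
      (0 : EuclideanSpace ℝ (Fin n)) ∈ closure Ω →
      A 0 = 0 →
      (∀ m : ℕ, ∀ x ∈ Ω ∩ ball (0 : EuclideanSpace ℝ (Fin n)) (η ^ m),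
        |u x - ∑ i, ∑ j, A m i j * x i * x j| ≤ η ^ (2 * m)) →
      (∀ m : ℕ, 1 ≤ m → (∑ i, ∑ j, |A m i j - A (m - 1) i j|) ≤ Ct) →
      ∀ x ∈ Ω ∩ ball (0 : EuclideanSpace ℝ (Fin n)) (1 / 2),
        |u x| ≤ C * ‖x‖ ^ 2 * |Real.log ‖x‖| := by
  have hlogη : Real.log η < 0 := Real.log_neg hη hη1
  have hL2 : (0:ℝ) < Real.log 2 := Real.log_pos one_lt_two
  have habsη : (0:ℝ) < |Real.log η| := abs_pos.mpr (ne_of_lt hlogη)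
  refine ⟨Ct / |Real.log η| + 1 / (η^2 * Real.log 2), ?_, ?_⟩
  · have h1 : 0 < Ct / |Real.log η| := div_pos hCt habsη
    have h2 : 0 < 1 / (η^2 * Real.log 2) := by positivity
    linarith
  intro n Ω u A h0 hA0 happ hinc x hx
  obtain ⟨hxΩ, hxball⟩ := hx
  rw [mem_ball_zero_iff] at hxball
  -- coefficient bound
  have hcoef : ∀ m : ℕ, (∑ i, ∑ j, |A m i j|) ≤ (m:ℝ) * Ct := by
    intro m
    induction m with
    | zero => simp [hA0]
    | succ k ih =>
      have h1 := hinc (k+1) (by omega)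
      simp only [Nat.add_sub_cancel] at h1
      have key : ∀ i j, |A (k+1) i j| ≤ |A (k+1) i j - A k i j| + |A k i j| := by
        intro i j
        calc |A (k+1) i j| = |(A (k+1) i j - A k i j) + A k i j| := by ring_nf
          _ ≤ _ := abs_add_le _ _
      have : (∑ i, ∑ j, |A (k+1) i j|)
          ≤ (∑ i, ∑ j, |A (k+1) i j - A k i j|) + ∑ i, ∑ j, |A k i j| := by
        rw [← Finset.sum_add_distrib]
        refine Finset.sum_le_sum fun i _ => ?_
        rw [← Finset.sum_add_distrib]
        exact Finset.sum_le_sum fun j _ => key i j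
      push_cast
      calc (∑ i, ∑ j, |A (k+1) i j|)
          ≤ (∑ i, ∑ j, |A (k+1) i j - A k i j|) + ∑ i, ∑ j, |A k i j| := this
        _ ≤ Ct + (k:ℝ) * Ct := add_le_add h1 ih
        _ = ((k:ℝ)+1) * Ct := by ring
  -- quadratic bound
  have hquad : ∀ m : ℕ, |∑ i, ∑ j, A m i j * x i * x j| ≤ ((m:ℝ) * Ct) * ‖x‖^2 := by
    intro m
    calc |∑ i, ∑ j, A m i j * x i * x j| ≤ ∑ i, ∑ j, |A m i j * x i * x j| := by
          refine (Finset.abs_sum_le_sum_abs _ _).trans ?_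
          exact Finset.sum_le_sum fun i _ => Finset.abs_sum_le_sum_abs _ _
      _ ≤ ∑ i, ∑ j, |A m i j| * ‖x‖^2 := by
          refine Finset.sum_le_sum fun i _ => Finset.sum_le_sum fun j _ => ?_
          rw [abs_mul, abs_mul]
          have hi := coord_le_norm x i
          have hj := coord_le_norm x j
          have hij : |x i| * |x j| ≤ ‖x‖ * ‖x‖ :=
            mul_le_mul hi hj (abs_nonneg _) (norm_nonneg _)
          calc |A m i j| * |x i| * |x j| = |A m i j| * (|x i| * |x j|) := by ring
            _ ≤ |A m i j| * (‖x‖ * ‖x‖) := mul_le_mul_of_nonneg_left hij (abs_nonneg _)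
            _ = |A m i j| * ‖x‖^2 := by ring
      _ = (∑ i, ∑ j, |A m i j|) * ‖x‖^2 := by simp [Finset.sum_mul]
      _ ≤ ((m:ℝ) * Ct) * ‖x‖^2 := mul_le_mul_of_nonneg_right (hcoef m) (sq_nonneg _)
  rcases eq_or_ne x 0 with rfl | hx0
  · -- x = 0
    have hu0 : ∀ m : ℕ, |u 0| ≤ η ^ (2*m) := by
      intro m
      have hb : (0 : EuclideanSpace ℝ (Fin n)) ∈ ball (0 : EuclideanSpace ℝ (Fin n)) (η^m) :=
        mem_ball_self (by positivity)
      have := happ m 0 ⟨hxΩ, hb⟩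
      simpa using this
    have htend : Filter.Tendsto (fun m : ℕ => η^(2*m)) Filter.atTop (nhds 0) := by
      simp_rw [pow_mul]
      exact tendsto_pow_atTop_nhds_zero_of_lt_one (by positivity) (by nlinarith)
    have hle : |u 0| ≤ 0 := ge_of_tendsto' htend hu0
    simpa using hle
  · have hxn : 0 < ‖x‖ := norm_pos_iff.mpr hx0
    have hxlt1 : ‖x‖ < 1 := by linarith
    have hlogx : Real.log ‖x‖ < 0 := Real.log_neg hxn hxlt1
    set t : ℝ := Real.log ‖x‖ / Real.log η with ht_def
    have ht : 0 < t := div_pos_of_neg_of_neg hlogx hlogη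
    have hηt : η ^ t = ‖x‖ := by
      rw [Real.rpow_def_of_pos hη]
      have : Real.log η * t = Real.log ‖x‖ := by
        rw [ht_def]; field_simp
        exact mul_div_cancel_left₀ _ (ne_of_lt hlogη)
      rw [this, Real.exp_log hxn]
    have hceil : (1:ℤ) ≤ ⌈t⌉ := Int.ceil_pos.mpr ht
    set m : ℕ := (⌈t⌉ - 1).toNat with hm_def
    have hmcast : (m:ℝ) = (⌈t⌉:ℝ) - 1 := by
      have h := Int.toNat_of_nonneg (show (0:ℤ) ≤ ⌈t⌉ - 1 by omega)
      have h2 := congrArg (fun z : ℤ => (z:ℝ)) h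
      push_cast at h2
      rw [hm_def]
      push_cast
      linarith
    have hm_lt : (m:ℝ) < t := by
      have := Int.ceil_lt_add_one t; linarith [hmcast]
    have hm_ge : t - 1 ≤ (m:ℝ) := by
      have := Int.le_ceil t; linarith [hmcast]
    have hmem : x ∈ ball (0 : EuclideanSpace ℝ (Fin n)) (η^m) := by
      rw [mem_ball_zero_iff]
      have h1 : η ^ t < η ^ ((m:ℝ)) := Real.rpow_lt_rpow_of_exponent_gt hη hη1 hm_lt
      rw [hηt, Real.rpow_natCast] at h1
      exact h1
    have happly := happ m x ⟨hxΩ, hmem⟩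
    have htri : |u x| ≤ η^(2*m) + ((m:ℝ) * Ct) * ‖x‖^2 := by
      have := hquad m
      calc |u x| = |(u x - ∑ i, ∑ j, A m i j * x i * x j) + ∑ i, ∑ j, A m i j * x i * x j| := by
            ring_nf
        _ ≤ |u x - ∑ i, ∑ j, A m i j * x i * x j| + |∑ i, ∑ j, A m i j * x i * x j| := abs_add_le _ _
        _ ≤ η^(2*m) + ((m:ℝ) * Ct) * ‖x‖^2 := add_le_add happly this
    -- bound η^(2m)
    have h1 : η^(2*m) ≤ ‖x‖^2 / η^2 := by
      have hle : η ^ ((m:ℝ)) ≤ η ^ (t - 1) :=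
        Real.rpow_le_rpow_of_exponent_ge hη hη1.le hm_ge
      rw [Real.rpow_natCast, Real.rpow_sub hη, Real.rpow_one, hηt] at hle
      have hnn : (0:ℝ) ≤ η ^ m := by positivity
      have hsq : (η^m)^2 ≤ (‖x‖/η)^2 := pow_le_pow_left₀ hnn hle 2
      calc η^(2*m) = (η^m)^2 := by rw [← pow_mul, mul_comm]
        _ ≤ (‖x‖/η)^2 := hsq
        _ = ‖x‖^2/η^2 := div_pow _ _ _
    have h2 : Real.log 2 ≤ |Real.log ‖x‖| := by
      have : Real.log ‖x‖ ≤ Real.log (1/2) := Real.log_le_log hxn hxball.le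
      rw [abs_of_neg hlogx]
      have h12 : Real.log (1/2) = -Real.log 2 := by
        rw [one_div, Real.log_inv]
      linarith
    have h3 : (m:ℝ) ≤ |Real.log ‖x‖| / |Real.log η| := by
      have : t = |Real.log ‖x‖| / |Real.log η| := by
        rw [abs_of_neg hlogx, abs_of_neg hlogη, ht_def, neg_div_neg_eq]
      linarith [hm_lt, this ▸ hm_lt]
    have e1 : η^(2*m) ≤ 1/(η^2 * Real.log 2) * ‖x‖^2 * |Real.log ‖x‖| := by
      have h5 : ‖x‖^2 * Real.log 2 ≤ ‖x‖^2 * |Real.log ‖x‖| :=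
        mul_le_mul_of_nonneg_left h2 (sq_nonneg _)
      have hpos : (0:ℝ) < η^2 * Real.log 2 := by positivity
      have h6 : ‖x‖^2 / η^2 = ‖x‖^2 * Real.log 2 / (η^2 * Real.log 2) := by
        field_simp
      have h7 : ‖x‖^2 * Real.log 2 / (η^2 * Real.log 2)
          ≤ ‖x‖^2 * |Real.log ‖x‖| / (η^2 * Real.log 2) :=
        (div_le_div_iff_of_pos_right hpos).mpr h5
      calc η^(2*m) ≤ ‖x‖^2/η^2 := h1
        _ = ‖x‖^2 * Real.log 2 / (η^2 * Real.log 2) := h6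
        _ ≤ ‖x‖^2 * |Real.log ‖x‖| / (η^2 * Real.log 2) := h7
        _ = 1/(η^2 * Real.log 2) * ‖x‖^2 * |Real.log ‖x‖| := by ring
    have e2 : ((m:ℝ) * Ct) * ‖x‖^2 ≤ Ct / |Real.log η| * ‖x‖^2 * |Real.log ‖x‖| := by
      have h8 : (m:ℝ) * (Ct * ‖x‖^2) ≤ (|Real.log ‖x‖| / |Real.log η|) * (Ct * ‖x‖^2) :=
        mul_le_mul_of_nonneg_right h3 (by positivity)
      calc ((m:ℝ) * Ct) * ‖x‖^2 = (m:ℝ) * (Ct * ‖x‖^2) := by ring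
        _ ≤ (|Real.log ‖x‖| / |Real.log η|) * (Ct * ‖x‖^2) := h8
        _ = Ct / |Real.log η| * ‖x‖^2 * |Real.log ‖x‖| := by ring
    calc |u x| ≤ η^(2*m) + ((m:ℝ) * Ct) * ‖x‖^2 := htri
      _ ≤ 1/(η^2 * Real.log 2) * ‖x‖^2 * |Real.log ‖x‖|
          + Ct / |Real.log η| * ‖x‖^2 * |Real.log ‖x‖| := add_le_add e1 e2
      _ = (Ct / |Real.log η| + 1 / (η^2 * Real.log 2)) * ‖x‖^2 * |Real.log ‖x‖| := by ring
end

section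
/- Let ω̃ : (0,1] → [0,∞) be nondecreasing with ∫_0^1 ω̃(ρ)/ρ dρ < ∞ and ω̃(1) ≤ 1, let 0 < θ ≤ 1 and 0 < η < 1, and define ω_u(r) = r^θ + ∫_0^{r/η²} ω̃(ρ)/ρ dρ + r^θ·∫_r^1 ω̃(ρ)/ρ^{1+θ} dρ for 0 < r < η². Then ω_u is nondecreasing on (0, η²) and ω_u(r) → 0 as r → 0⁺; that is, ω_u extends to a modulus of continuity. -/
/-!
Since `dρ/ρ` is dilation invariant and `ω̃` is nondecreasing, `∫_r^s ω̃/ρ ≤ ∫_{r/η²}^{s/η²} ω̃/ρ`,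
and since `(r/ρ)^θ ≤ 1` for `ρ ≥ r`, `r^θ ∫_r^s ω̃/ρ^{1+θ} ≤ ∫_r^s ω̃/ρ`: the increase of the
middle term pays for the decrease of the last one, which gives monotonicity. For the limit, write
`r^θ ∫_r^1 ω̃/ρ^{1+θ} = ∫_0^1 1_{ρ>r} (r/ρ)^θ ω̃(ρ)/ρ dρ`; the integrand is dominated by the Dini
integrand `ω̃/ρ` and tends to `0` pointwise, so dominated convergence applies.
-/

open MeasureTheory Filter Set Topology

theorem IntervalIntegrable.div_rpow_of_div_self {f : ℝ → ℝ} {a b : ℝ} (ha : 0 < a) (hb : 0 < b)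
    (hf : IntervalIntegrable (fun x => f x / x) volume a b) (θ : ℝ) :
    IntervalIntegrable (fun x => f x / x ^ (1 + θ)) volume a b := by
  have hpos : ∀ x ∈ uIcc a b, 0 < x := fun x hx => (lt_min ha hb).trans_le hx.1
  have hcont : ContinuousOn (fun x : ℝ => x ^ (-θ)) (uIcc a b) := fun x hx =>
    (Real.continuousAt_rpow_const x _ (Or.inl (hpos x hx).ne')).continuousWithinAt
  refine (hf.mul_continuousOn hcont).congr fun x hx => ?_
  have hx : 0 < x := hpos x (uIoc_subset_uIcc hx)
  simp only [Real.rpow_add hx, Real.rpow_neg hx.le, Real.rpow_one]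
  field_simp

theorem MonotoneOn.intervalIntegrable_div_self {g : ℝ → ℝ} {a b : ℝ} (ha : 0 < a) (hb : 0 < b)
    (hg : MonotoneOn g (uIcc a b)) : IntervalIntegrable (fun x => g x / x) volume a b := by
  have hcont : ContinuousOn (fun x : ℝ => x⁻¹) (uIcc a b) :=
    continuousOn_inv₀.mono fun x hx => ((lt_min ha hb).trans_le hx.1).ne'
  simpa only [div_eq_mul_inv] using hg.intervalIntegrable.mul_continuousOn hcont

theorem integral_comp_div_div_self (g : ℝ → ℝ) (a b : ℝ) {c : ℝ} (hc : c ≠ 0) :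
    ∫ x in a..b, g (x / c) / x = ∫ x in a / c..b / c, g x / x := by
  have h := intervalIntegral.integral_comp_div (a := a) (b := b) (fun x => g x / x) hc
  have hrw : ∀ x, g (x / c) / (x / c) = c * (g (x / c) / x) := fun x => by
    rw [div_div_eq_mul_div]; ring
  simp only [hrw, intervalIntegral.integral_const_mul, smul_eq_mul] at h
  exact mul_left_cancel₀ hc h

theorem rpow_mul_div_rpow_one_add {r x : ℝ} (hr : 0 ≤ r) (hx : 0 < x) (θ y : ℝ) :
    r ^ θ * (y / x ^ (1 + θ)) = (r / x) ^ θ * (y / x) := by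
  rw [Real.div_rpow hr hx.le, Real.rpow_add hx, Real.rpow_one]
  field_simp

theorem rpow_mul_integral_div_rpow_le {f : ℝ → ℝ} {r s θ : ℝ} (hr : 0 < r) (hrs : r ≤ s)
    (hθ : 0 ≤ θ) (hf : ∀ x ∈ Icc r s, 0 ≤ f x)
    (hint : IntervalIntegrable (fun x => f x / x) volume r s) :
    r ^ θ * ∫ x in r..s, f x / x ^ (1 + θ) ≤ ∫ x in r..s, f x / x := by
  rw [← intervalIntegral.integral_const_mul]
  refine intervalIntegral.integral_mono_on hrs
    ((hint.div_rpow_of_div_self hr (hr.trans_le hrs) θ).const_mul _) hint fun x hx => ?_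
  have hx0 : 0 < x := hr.trans_le hx.1
  rw [rpow_mul_div_rpow_one_add hr.le hx0]
  refine mul_le_of_le_one_left (div_nonneg (hf x hx) hx0.le) ?_
  exact Real.rpow_le_one (div_nonneg hr.le hx0.le) ((div_le_one hx0).2 hx.1) hθ

theorem integral_div_self_le_integral_div_self_div {g : ℝ → ℝ} {r s c : ℝ} (hr : 0 < r)
    (hrs : r ≤ s) (hc : 0 < c) (hc1 : c ≤ 1) (hg : MonotoneOn g (Icc r (s / c))) :
    ∫ x in r..s, g x / x ≤ ∫ x in r / c..s / c, g x / x := by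
  have hs : s ≤ s / c := le_div_self (hr.le.trans hrs) hc hc1
  have hdil : ∀ x ∈ Icc r s, x / c ∈ Icc r (s / c) := fun x hx =>
    ⟨hx.1.trans (le_div_self (hr.le.trans hx.1) hc hc1), div_le_div_of_nonneg_right hx.2 hc.le⟩
  rw [← integral_comp_div_div_self g r s hc.ne']
  refine intervalIntegral.integral_mono_on hrs
    (MonotoneOn.intervalIntegrable_div_self hr (hr.trans_le hrs)
      (hg.mono (by rw [uIcc_of_le hrs]; exact Icc_subset_Icc_right hs)))
    (MonotoneOn.intervalIntegrable_div_self hr (hr.trans_le hrs) fun x hx y hy hxy => ?_)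
    fun x hx => ?_
  · rw [uIcc_of_le hrs] at hx hy
    exact hg (hdil x hx) (hdil y hy) (div_le_div_of_nonneg_right hxy hc.le)
  · refine div_le_div_of_nonneg_right ?_ (hr.le.trans hx.1)
    exact hg ⟨hx.1, hx.2.trans hs⟩ (hdil x hx) (le_div_self (hr.le.trans hx.1) hc hc1)

theorem monotoneOn_rpow_add_integral_add_rpow_mul_integral {ω : ℝ → ℝ} {θ c : ℝ} (hc : 0 < c)
    (hc1 : c ≤ 1) (hθ : 0 ≤ θ) (hω : ∀ r ∈ Ioc (0 : ℝ) 1, 0 ≤ ω r)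
    (hω_mono : MonotoneOn ω (Ioc 0 1)) (hdini : IntegrableOn (fun ρ => ω ρ / ρ) (Ioc 0 1)) :
    MonotoneOn (fun r => r ^ θ + (∫ ρ in (0 : ℝ)..r / c, ω ρ / ρ)
      + r ^ θ * ∫ ρ in r..1, ω ρ / ρ ^ (1 + θ)) (Ioc 0 c) := by
  have hI : ∀ a ∈ Icc (0 : ℝ) 1, ∀ b ∈ Icc (0 : ℝ) 1,
      IntervalIntegrable (fun ρ => ω ρ / ρ) volume a b := fun a ha b hb =>
    ((intervalIntegrable_iff_integrableOn_Ioc_of_le zero_le_one).2 hdini).mono_set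
      (uIcc_subset_uIcc (Icc_subset_uIcc ha) (Icc_subset_uIcc hb))
  have hdiv : ∀ t ∈ Ioc 0 c, t / c ∈ Icc (0 : ℝ) 1 := fun t ht =>
    ⟨div_nonneg ht.1.le hc.le, (div_le_one hc).2 ht.2⟩
  intro r hr s hs hrs
  have hs1 : s ∈ Icc (0 : ℝ) 1 := ⟨hs.1.le, hs.2.trans hc1⟩
  have hr1 : r ∈ Icc (0 : ℝ) 1 := ⟨hr.1.le, hrs.trans hs1.2⟩
  have hsplitA : (∫ ρ in (0 : ℝ)..s / c, ω ρ / ρ)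
      = (∫ ρ in (0 : ℝ)..r / c, ω ρ / ρ) + ∫ ρ in r / c..s / c, ω ρ / ρ :=
    (intervalIntegral.integral_add_adjacent_intervals
      (hI 0 ⟨le_rfl, zero_le_one⟩ _ (hdiv r hr)) (hI _ (hdiv r hr) _ (hdiv s hs))).symm
  have hsplitB : (∫ ρ in r..1, ω ρ / ρ ^ (1 + θ))
      = (∫ ρ in r..s, ω ρ / ρ ^ (1 + θ)) + ∫ ρ in s..1, ω ρ / ρ ^ (1 + θ) :=
    (intervalIntegral.integral_add_adjacent_intervals
      ((hI r hr1 s hs1).div_rpow_of_div_self hr.1 hs.1 θ)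
      ((hI s hs1 1 ⟨zero_le_one, le_rfl⟩).div_rpow_of_div_self hs.1 one_pos θ)).symm
  have hkey : r ^ θ * ∫ ρ in r..s, ω ρ / ρ ^ (1 + θ) ≤ ∫ ρ in r / c..s / c, ω ρ / ρ :=
    (rpow_mul_integral_div_rpow_le hr.1 hrs hθ
      (fun x hx => hω x ⟨hr.1.trans_le hx.1, hx.2.trans hs1.2⟩) (hI r hr1 s hs1)).trans
    (integral_div_self_le_integral_div_self_div hr.1 hrs hc hc1
      (hω_mono.mono fun x hx => ⟨hr.1.trans_le hx.1, hx.2.trans (hdiv s hs).2⟩))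
  have hpow : r ^ θ ≤ s ^ θ := Real.rpow_le_rpow hr.1.le hrs hθ
  have htail : r ^ θ * ∫ ρ in s..1, ω ρ / ρ ^ (1 + θ) ≤ s ^ θ * ∫ ρ in s..1, ω ρ / ρ ^ (1 + θ) :=
    mul_le_mul_of_nonneg_right hpow <| intervalIntegral.integral_nonneg hs1.2 fun x hx =>
      div_nonneg (hω x ⟨hs.1.trans_le hx.1, hx.2⟩) (Real.rpow_nonneg (hs.1.le.trans hx.1) _)
  dsimp only
  rw [hsplitA, hsplitB, mul_add]
  linarith

theorem rpow_mul_integral_div_rpow_eq_setIntegral_indicator {f : ℝ → ℝ} {r : ℝ} (hr : 0 < r)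
    (hr1 : r ≤ 1) (θ : ℝ) :
    r ^ θ * ∫ ρ in r..1, f ρ / ρ ^ (1 + θ)
      = ∫ ρ in Ioc 0 1, (Ioc r 1).indicator (fun ρ => (r / ρ) ^ θ * (f ρ / ρ)) ρ := by
  rw [intervalIntegral.integral_of_le hr1, ← integral_const_mul,
    setIntegral_indicator measurableSet_Ioc, inter_eq_right.2 (Ioc_subset_Ioc_left hr.le)]
  exact setIntegral_congr_fun measurableSet_Ioc fun ρ hρ =>
    rpow_mul_div_rpow_one_add hr.le (hr.trans hρ.1) θ (f ρ)

theorem tendsto_rpow_mul_integral_div_rpow {f : ℝ → ℝ} {θ : ℝ} (hθ : 0 < θ)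
    (hf : IntegrableOn (fun ρ => f ρ / ρ) (Ioc 0 1)) :
    Tendsto (fun r => r ^ θ * ∫ ρ in r..1, f ρ / ρ ^ (1 + θ)) (𝓝[>] 0) (𝓝 0) := by
  set F : ℝ → ℝ → ℝ := fun r => (Ioc r 1).indicator fun ρ => (r / ρ) ^ θ * (f ρ / ρ)
  have hmeas : ∀ r, AEStronglyMeasurable (F r) (volume.restrict (Ioc 0 1)) := fun r =>
    ((by fun_prop : Measurable fun ρ : ℝ => (r / ρ) ^ θ).aestronglyMeasurable.mul
      hf.aestronglyMeasurable).indicator measurableSet_Ioc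
  have hbound : ∀ r, 0 < r → ∀ ρ, ‖F r ρ‖ ≤ ‖f ρ / ρ‖ := by
    intro r hr ρ
    simp only [F]
    by_cases hρ : ρ ∈ Ioc r 1
    · have hρ0 : 0 < ρ := hr.trans hρ.1
      have hq : (r / ρ) ^ θ ≤ 1 :=
        Real.rpow_le_one (div_nonneg hr.le hρ0.le) ((div_le_one hρ0).2 hρ.1.le) hθ.le
      rw [indicator_of_mem hρ, norm_mul, Real.norm_of_nonneg (by positivity)]
      exact mul_le_of_le_one_left (norm_nonneg _) hq
    · rw [indicator_of_notMem hρ, norm_zero]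
      exact norm_nonneg _
  have hpointwise : ∀ ρ ∈ Ioc (0 : ℝ) 1, Tendsto (fun r => F r ρ) (𝓝[>] 0) (𝓝 0) := by
    intro ρ hρ
    have hcont : Tendsto (fun r => (r / ρ) ^ θ * (f ρ / ρ)) (𝓝 0) (𝓝 0) := by
      simpa [Real.zero_rpow hθ.ne'] using
        (((continuous_id.div_const ρ).rpow_const fun _ => Or.inr hθ.le).tendsto 0).mul_const
          (f ρ / ρ)
    refine (hcont.mono_left nhdsWithin_le_nhds).congr' ?_
    filter_upwards [Ioo_mem_nhdsGT hρ.1] with r hr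
    simp only [F, indicator_of_mem (show ρ ∈ Ioc r 1 from ⟨hr.2, hρ.2⟩)]
  have hdct : Tendsto (fun r => ∫ ρ in Ioc 0 1, F r ρ) (𝓝[>] 0) (𝓝 0) := by
    simpa using tendsto_integral_filter_of_dominated_convergence (l := 𝓝[>] 0)
      (fun ρ => ‖f ρ / ρ‖) (Eventually.of_forall hmeas)
      (eventually_nhdsWithin_of_forall fun r hr => Eventually.of_forall (hbound r hr))
      hf.norm ((ae_restrict_mem measurableSet_Ioc).mono hpointwise)
  refine hdct.congr' ?_
  filter_upwards [Ioo_mem_nhdsGT one_pos] with r hr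
  exact (rpow_mul_integral_div_rpow_eq_setIntegral_indicator hr.1 hr.2.le θ).symm

theorem tendsto_integral_zero_nhdsGT {f : ℝ → ℝ} {b : ℝ} (hb : 0 < b)
    (hf : IntegrableOn f (Ioc 0 b)) :
    Tendsto (fun x => ∫ t in 0..x, f t) (𝓝[>] 0) (𝓝 0) := by
  have h := intervalIntegral.continuousWithinAt_primitive (f := f) (μ := volume) (a := 0)
    (b₀ := 0) (b₁ := 0) (b₂ := b) (measure_singleton 0)
    (by rwa [min_self, max_eq_right hb.le, intervalIntegrable_iff_integrableOn_Ioc_of_le hb.le])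
  simpa using (h.mono_of_mem_nhdsWithin (Icc_mem_nhdsGT hb)).tendsto

theorem tendsto_div_const_nhdsGT_zero {c : ℝ} (hc : 0 < c) :
    Tendsto (fun r => r / c) (𝓝[>] 0) (𝓝[>] 0) :=
  tendsto_nhdsWithin_iff.2
    ⟨by simpa using ((continuous_id.div_const c).tendsto 0).mono_left nhdsWithin_le_nhds,
      eventually_nhdsWithin_of_forall fun _ hr => div_pos hr hc⟩

theorem modulus_of_continuity_C2_general (η θ : ℝ)
    (hη : 0 < η) (hη1 : η < 1) (hθ : 0 < θ)
    (ω : ℝ → ℝ)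
    (hωnn : ∀ r : ℝ, 0 < r → r ≤ 1 → 0 ≤ ω r)
    (hωmono : ∀ r s : ℝ, 0 < r → r ≤ s → s ≤ 1 → ω r ≤ ω s)
    (hωdini : IntegrableOn (fun ρ : ℝ => ω ρ / ρ) (Set.Ioc 0 1)) :
    MonotoneOn
      (fun r : ℝ => r ^ θ + (∫ ρ in (0 : ℝ)..(r / η ^ 2), ω ρ / ρ)
        + r ^ θ * ∫ ρ in r..(1 : ℝ), ω ρ / ρ ^ (1 + θ))
      (Set.Ioo 0 (η ^ 2)) ∧
    Tendsto
      (fun r : ℝ => r ^ θ + (∫ ρ in (0 : ℝ)..(r / η ^ 2), ω ρ / ρ)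
        + r ^ θ * ∫ ρ in r..(1 : ℝ), ω ρ / ρ ^ (1 + θ))
      (nhdsWithin 0 (Set.Ioi 0)) (nhds 0) := by
  have hc : 0 < η ^ 2 := by positivity
  have hc1 : η ^ 2 ≤ 1 := pow_le_one₀ hη.le hη1.le
  refine ⟨(monotoneOn_rpow_add_integral_add_rpow_mul_integral hc hc1 hθ.le
    (fun r hr => hωnn r hr.1 hr.2) (fun r hr s hs hrs => hωmono r s hr.1 hrs hs.2)
    hωdini).mono Ioo_subset_Ioc_self, ?_⟩
  have hpow : Tendsto (fun r : ℝ => r ^ θ) (𝓝[>] 0) (𝓝 0) := by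
    simpa [Real.zero_rpow hθ.ne'] using
      ((continuous_id.rpow_const fun _ => Or.inr hθ.le).tendsto 0).mono_left nhdsWithin_le_nhds
  have hdini : Tendsto (fun r => ∫ ρ in (0 : ℝ)..r / η ^ 2, ω ρ / ρ) (𝓝[>] 0) (𝓝 0) :=
    (tendsto_integral_zero_nhdsGT one_pos hωdini).comp (tendsto_div_const_nhdsGT_zero hc)
  simpa using (hpow.add hdini).add (tendsto_rpow_mul_integral_div_rpow hθ hωdini)

/-- The function `ω_u(r) = r^θ + ∫_0^{r/η²} ω̃(ρ)/ρ dρ + r^θ ∫_r^1 ω̃(ρ)/ρ^{1+θ} dρ` arising in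
pointwise `C²` regularity under Dini conditions is nondecreasing on `(0, η²)` and tends to `0`
as `r → 0⁺`; i.e. it extends to a modulus of continuity. -/
theorem modulus_of_continuity_C2 (η θ : ℝ)
    (hη : 0 < η) (hη1 : η < 1) (hθ : 0 < θ) (hθ1 : θ ≤ 1)
    (ω : ℝ → ℝ)
    (hωnn : ∀ r : ℝ, 0 < r → r ≤ 1 → 0 ≤ ω r)
    (hωmono : ∀ r s : ℝ, 0 < r → r ≤ s → s ≤ 1 → ω r ≤ ω s)
    (hω1 : ω 1 ≤ 1)
    (hωdini : IntegrableOn (fun ρ : ℝ => ω ρ / ρ) (Set.Ioc 0 1)) :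
    MonotoneOn
      (fun r : ℝ => r ^ θ + (∫ ρ in (0 : ℝ)..(r / η ^ 2), ω ρ / ρ)
        + r ^ θ * ∫ ρ in r..(1 : ℝ), ω ρ / ρ ^ (1 + θ))
      (Set.Ioo 0 (η ^ 2)) ∧
    Tendsto
      (fun r : ℝ => r ^ θ + (∫ ρ in (0 : ℝ)..(r / η ^ 2), ω ρ / ρ)
        + r ^ θ * ∫ ρ in r..(1 : ℝ), ω ρ / ρ ^ (1 + θ))
      (nhdsWithin 0 (Set.Ioi 0)) (nhds 0) :=
  modulus_of_continuity_C2_general η θ hη hη1 hθ ω hωnn hωmono hωdini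
end

section
/- Let 0 < η < 1, θ > 0, C > 0, and let u : Ω → ℝ with 0 ∈ ∂Ω. Suppose there are constants a_m (m ≥ 0, a_0 = 0) and positive numbers A_m with A_0 = 1, A_m ≤ max(ω̃(η^m), η^θ A_{m−1}) for a nondecreasing Dini function ω̃, such that sup_{Ω ∩ B_{η^m}} |u − a_m·x_n| ≤ η^m·A_m and |a_m − a_{m−1}| ≤ C·A_{m−1} for all m ≥ 1. Then the sequence (a_m) converges to some a ∈ ℝ with |a| ≤ C·Σ_{m=0}^∞ A_m < ∞, and there is a modulus of continuity ω_u (depending only on η, θ, C, ω̃) such that |u(x) − a·x_n| ≤ |x|·ω_u(|x|) for all x ∈ Ω ∩ B_{η²}. -/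
open Metric MeasureTheory Filter

private lemma abs_coord_le_norm' {n : ℕ} (x : EuclideanSpace ℝ (Fin (n+1))) (i : Fin (n+1)) :
    |x i| ≤ ‖x‖ := by
  rw [EuclideanSpace.norm_eq, ← Real.sqrt_sq_eq_abs]
  apply Real.sqrt_le_sqrt
  have := Finset.single_le_sum (f := fun j => ‖x j‖ ^ 2) (fun j _ => sq_nonneg _)
    (Finset.mem_univ i)
  simpa [Real.norm_eq_abs, sq_abs] using this

private lemma dini_summable' {η : ℝ} (hη : 0 < η) (hη1 : η < 1) {ω : ℝ → ℝ}
    (hωnn : ∀ r : ℝ, 0 < r → r ≤ 1 → 0 ≤ ω r)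
    (hωmono : ∀ r s : ℝ, 0 < r → r ≤ s → s ≤ 1 → ω r ≤ ω s)
    (hωdini : IntegrableOn (fun ρ : ℝ => ω ρ / ρ) (Set.Ioc 0 1)) :
    Summable (fun m : ℕ => ω (η ^ (m + 1))) := by
  set g : ℝ → ℝ := fun ρ => ω ρ / ρ with hg
  have hηk : ∀ k : ℕ, 0 < η ^ k := fun k => pow_pos hη k
  have hηk1 : ∀ k : ℕ, η ^ k ≤ 1 := fun k => pow_le_one₀ hη.le hη1.le
  have hlog : Real.log η < 0 := Real.log_neg hη hη1
  set L : ℝ := -Real.log η with hL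
  have hLpos : 0 < L := by simp [hL]; linarith
  have hstep : ∀ k : ℕ, η ^ (k + 1) ≤ η ^ k := fun k =>
    pow_le_pow_of_le_one hη.le hη1.le (Nat.le_succ k)
  have hInt : ∀ j k : ℕ, j ≤ k → IntervalIntegrable g volume (η ^ k) (η ^ j) := by
    intro j k hjk
    rw [intervalIntegrable_iff]
    apply hωdini.mono_set
    rw [Set.uIoc_of_le (pow_le_pow_of_le_one hη.le hη1.le hjk)]
    exact Set.Ioc_subset_Ioc (hηk k).le (hηk1 j)
  have hterm : ∀ k : ℕ, ω (η ^ (k + 1)) * L ≤ ∫ ρ in (η ^ (k+1))..(η ^ k), g ρ := by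
    intro k
    have hab : η ^ (k+1) ≤ η ^ k := hstep k
    have hconst : ∫ ρ in (η ^ (k+1))..(η ^ k), ω (η ^ (k+1)) / ρ = ω (η ^ (k+1)) * L := by
      have h0 : (0:ℝ) ∉ Set.uIcc (η ^ (k+1)) (η ^ k) := by
        rw [Set.uIcc_of_le hab]
        intro h; exact absurd h.1 (not_le.2 (hηk (k+1)))
      simp only [div_eq_mul_inv]
      rw [intervalIntegral.integral_const_mul, integral_inv h0]
      have h2 : η ^ k / η ^ (k+1) = η⁻¹ := by
        rw [pow_succ]; field_simp
      rw [h2, Real.log_inv, hL]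
    rw [← hconst]
    apply intervalIntegral.integral_mono_on hab
    · apply ContinuousOn.intervalIntegrable
      apply ContinuousOn.div continuousOn_const continuousOn_id
      intro ρ hρ
      rw [Set.uIcc_of_le hab] at hρ
      exact ne_of_gt (lt_of_lt_of_le (hηk (k+1)) hρ.1)
    · exact hInt (k) (k+1) (Nat.le_succ k)
    · intro ρ hρ
      have hρ0 : 0 < ρ := lt_of_lt_of_le (hηk (k+1)) hρ.1
      have : ω (η ^ (k+1)) ≤ ω ρ :=
        hωmono _ _ (hηk (k+1)) hρ.1 (le_trans hρ.2 (hηk1 k))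
      exact (div_le_div_iff_of_pos_right hρ0).mpr this
  apply summable_of_sum_range_le (c := (∫ ρ in Set.Ioc 0 1, g ρ) / L)
    (fun k => hωnn _ (hηk (k+1)) (hηk1 (k+1)))
  intro N
  rw [le_div_iff₀ hLpos]
  have tele : ∑ i ∈ Finset.range N, ∫ ρ in (η ^ (N - i))..(η ^ (N - (i+1))), g ρ
      = ∫ ρ in (η ^ (N - 0))..(η ^ (N - N)), g ρ := by
    apply intervalIntegral.sum_integral_adjacent_intervals (a := fun i => η ^ (N - i))
    intro k _
    exact hInt (N - (k+1)) (N - k) (by omega)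
  have hsum1 : ∑ i ∈ Finset.range N, ω (η ^ (N - i)) * L
      ≤ ∑ i ∈ Finset.range N, ∫ ρ in (η ^ (N - i))..(η ^ (N - (i+1))), g ρ := by
    apply Finset.sum_le_sum
    intro i hi
    have hiN : i < N := Finset.mem_range.1 hi
    have h1 : N - i = (N - (i+1)) + 1 := by omega
    rw [h1]
    exact hterm (N - (i+1))
  have hrefl : ∑ i ∈ Finset.range N, ω (η ^ (N - i)) * L
      = ∑ m ∈ Finset.range N, ω (η ^ (m + 1)) * L := by
    rw [← Finset.sum_range_reflect]
    apply Finset.sum_congr rfl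
    intro j hj
    have h2 : N - (N - 1 - j) = j + 1 := by
      have := Finset.mem_range.1 hj; omega
    rw [h2]
  have hlast : ∫ ρ in (η ^ (N - 0))..(η ^ (N - N)), g ρ ≤ ∫ ρ in Set.Ioc 0 1, g ρ := by
    simp only [Nat.sub_zero, Nat.sub_self, pow_zero]
    rw [intervalIntegral.integral_of_le (hηk1 N)]
    apply setIntegral_mono_set hωdini
    · refine (ae_restrict_iff' measurableSet_Ioc).2 (ae_of_all _ fun ρ hρ => ?_)
      exact div_nonneg (hωnn ρ hρ.1 hρ.2) hρ.1.le
    · exact (Set.Ioc_subset_Ioc_left (hηk N).le).eventuallyLE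
  calc (∑ m ∈ Finset.range N, ω (η ^ (m + 1))) * L
      = ∑ m ∈ Finset.range N, ω (η ^ (m + 1)) * L := Finset.sum_mul _ _ _
    _ = ∑ i ∈ Finset.range N, ω (η ^ (N - i)) * L := hrefl.symm
    _ ≤ _ := le_trans hsum1 (tele ▸ hlast)

private noncomputable def Bseq (η θ : ℝ) (ω : ℝ → ℝ) : ℕ → ℝ
  | 0 => 1
  | (m+1) => ω (η ^ (m+1)) + η ^ θ * Bseq η θ ω m

set_option maxHeartbeats 1000000

/-- Passage from the dyadic boundary iteration with Dini-controlled increments to pointwise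
boundary `C¹` differentiability: if `sup_{Ω ∩ B_{η^m}} |u − a_m x_n| ≤ η^m A_m` with
`|a_m − a_{m−1}| ≤ C A_{m−1}`, where `A_0 = 1`, `A_m ≤ max(ω̃(η^m), η^θ A_{m−1})` and `ω̃` is
Dini, then `a_m → a` with `|a| ≤ C Σ A_m < ∞` and `|u(x) − a x_n| ≤ |x| ω_u(|x|)` on
`Ω ∩ B_{η²}` for a modulus of continuity `ω_u` depending only on `η, θ, C, ω̃`. -/
theorem boundary_C1_from_dini_iteration (η θ C : ℝ)
    (hη : 0 < η) (hη1 : η < 1) (hθ : 0 < θ) (hθ1 : θ ≤ 1) (hC : 0 < C)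
    (ω : ℝ → ℝ)
    (hωnn : ∀ r : ℝ, 0 < r → r ≤ 1 → 0 ≤ ω r)
    (hωmono : ∀ r s : ℝ, 0 < r → r ≤ s → s ≤ 1 → ω r ≤ ω s)
    (hωdini : IntegrableOn (fun ρ : ℝ => ω ρ / ρ) (Set.Ioc 0 1)) :
    ∃ ωu : ℝ → ℝ,
      (∀ r : ℝ, 0 < r → 0 ≤ ωu r) ∧ MonotoneOn ωu (Set.Ioi 0) ∧
      Tendsto ωu (nhdsWithin 0 (Set.Ioi 0)) (nhds 0) ∧
      ∀ (n : ℕ) (Ω : Set (EuclideanSpace ℝ (Fin (n + 1))))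
        (u : EuclideanSpace ℝ (Fin (n + 1)) → ℝ) (a A : ℕ → ℝ),
        (0 : EuclideanSpace ℝ (Fin (n + 1))) ∈ frontier Ω →
        a 0 = 0 → A 0 = 1 → (∀ m, 0 < A m) →
        (∀ m : ℕ, 1 ≤ m → A m ≤ max (ω (η ^ m)) (η ^ θ * A (m - 1))) →
        (∀ m : ℕ, 1 ≤ m → ∀ x ∈ Ω ∩ ball (0 : EuclideanSpace ℝ (Fin (n + 1))) (η ^ m),
          |u x - a m * x (Fin.last n)| ≤ η ^ m * A m) →
        (∀ m : ℕ, 1 ≤ m → |a m - a (m - 1)| ≤ C * A (m - 1)) →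
        Summable A ∧
        ∃ l : ℝ, Tendsto a atTop (nhds l) ∧ |l| ≤ C * ∑' m, A m ∧
          ∀ x ∈ Ω ∩ ball (0 : EuclideanSpace ℝ (Fin (n + 1))) (η ^ 2),
            |u x - l * x (Fin.last n)| ≤ ‖x‖ * ωu ‖x‖ := by
  have hW : Summable (fun m : ℕ => ω (η ^ (m + 1))) := dini_summable' hη hη1 hωnn hωmono hωdini
  have hηθ0 : 0 < η ^ θ := Real.rpow_pos_of_pos hη θ
  have hηθ1 : η ^ θ < 1 := Real.rpow_lt_one hη.le hη1 hθ
  have hωk : ∀ k : ℕ, 0 ≤ ω (η ^ (k + 1)) :=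
    fun k => hωnn _ (pow_pos hη _) (pow_le_one₀ hη.le hη1.le)
  set B : ℕ → ℝ := Bseq η θ ω with hBdef
  have hB0 : ∀ m, 0 < B m := by
    intro m
    induction m with
    | zero => norm_num [hBdef, Bseq]
    | succ k ih =>
      have := hωk k
      simp only [hBdef, Bseq] at *
      positivity
  have hBsum : Summable B := by
    set W : ℝ := ∑' m : ℕ, ω (η ^ (m + 1)) with hWdef
    have hWnn : 0 ≤ W := tsum_nonneg hωk
    have h1θ : 0 < 1 - η ^ θ := by linarith
    apply summable_of_sum_range_le (c := (1 + W) / (1 - η ^ θ)) (fun m => (hB0 m).le)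
    intro N
    induction N with
    | zero => simp; positivity
    | succ N ih =>
      rw [Finset.sum_range_succ']
      have e1 : ∀ i : ℕ, B (i + 1) = ω (η ^ (i + 1)) + η ^ θ * B i := fun i => rfl
      simp only [e1]
      rw [Finset.sum_add_distrib, ← Finset.mul_sum]
      have h2 : ∑ i ∈ Finset.range N, ω (η ^ (i + 1)) ≤ W :=
        Summable.sum_le_tsum _ (fun k _ => hωk k) hW
      have h3 : B 0 = 1 := rfl
      have h4 : η ^ θ * ∑ i ∈ Finset.range N, B i ≤ η ^ θ * ((1 + W) / (1 - η ^ θ)) :=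
        mul_le_mul_of_nonneg_left ih hηθ0.le
      have h5 : (1 + W) + η ^ θ * ((1 + W) / (1 - η ^ θ)) = (1 + W) / (1 - η ^ θ) := by
        field_simp
        ring
      linarith
  set T : ℕ → ℝ := fun m => ∑' j : ℕ, B (m + j) with hTdef
  have hTsummable : ∀ m, Summable (fun j => B (m + j)) := by
    intro m
    exact (summable_nat_add_iff m).2 hBsum |>.congr (fun j => by rw [Nat.add_comm])
  have hT0 : ∀ m, 0 ≤ T m := fun m => tsum_nonneg (fun j => (hB0 _).le)
  have hBT : ∀ m, B m ≤ T m := by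
    intro m
    have := Summable.le_tsum (hTsummable m) 0 (fun j _ => (hB0 _).le)
    simpa using this
  have hTrec : ∀ m, T m = B m + T (m + 1) := by
    intro m
    have h1 := Summable.tsum_eq_zero_add (hTsummable m)
    have h2 : ∀ j : ℕ, B (m + (j + 1)) = B ((m + 1) + j) := fun j => by
      congr 1; omega
    simp only [hTdef, Nat.add_zero, h2] at h1 ⊢
    exact h1
  have hTanti : Antitone T := by
    apply antitone_nat_of_succ_le
    intro m
    have := hB0 m
    rw [hTrec m]
    linarith
  have hTtend : Tendsto T atTop (nhds 0) := by
    have h1 := tendsto_sum_nat_add B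
    apply h1.congr
    intro i
    exact tsum_congr fun k => by rw [Nat.add_comm]
  have hcoef : (0:ℝ) < (η ^ 2)⁻¹ + C := by positivity
  refine ⟨fun r => ((η ^ 2)⁻¹ + C) * T (⌊Real.log r / Real.log η⌋₊ - 1), ?_, ?_, ?_, ?_⟩
  · intro r _
    exact mul_nonneg hcoef.le (hT0 _)
  · intro r hr s hs hrs
    have hlogη : Real.log η < 0 := Real.log_neg hη hη1
    have h1 : Real.log s / Real.log η ≤ Real.log r / Real.log η := by
      rw [div_le_div_right_of_neg hlogη]
      exact Real.log_le_log hr hrs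
    have h2 : ⌊Real.log s / Real.log η⌋₊ - 1 ≤ ⌊Real.log r / Real.log η⌋₊ - 1 :=
      Nat.sub_le_sub_right (Nat.floor_mono h1) 1
    exact mul_le_mul_of_nonneg_left (hTanti h2) hcoef.le
  · have hlogη : Real.log η < 0 := Real.log_neg hη hη1
    have hν : Tendsto (fun r : ℝ => ⌊Real.log r / Real.log η⌋₊ - 1) (nhdsWithin 0 (Set.Ioi 0)) atTop := by
      apply Tendsto.comp (tendsto_sub_atTop_nat 1)
      apply Tendsto.comp tendsto_nat_floor_atTop
      have h1 : Tendsto Real.log (nhdsWithin 0 (Set.Ioi 0)) atBot :=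
        Real.tendsto_log_nhdsGT_zero
      have h2 : Tendsto (fun x : ℝ => x / Real.log η) atBot atTop := by
        exact (tendsto_div_const_atTop_of_neg hlogη).2 tendsto_id
      exact h2.comp h1
    have h3 : Tendsto (fun k => ((η ^ 2)⁻¹ + C) * T k) atTop (nhds 0) := by
      have := hTtend.const_mul ((η ^ 2)⁻¹ + C)
      simpa using this
    exact h3.comp hν
  · intro n Ω u a A h0 ha0 hA0 hApos hArec hu hInc
    have hAB : ∀ m, A m ≤ B m := by
      intro m
      induction m with
      | zero => simp [hA0, hBdef, Bseq]
      | succ k ih =>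
        have h1 := hArec (k+1) (by omega)
        simp only [Nat.add_sub_cancel] at h1
        have e1 : B (k+1) = ω (η ^ (k+1)) + η ^ θ * B k := rfl
        rw [e1]
        refine le_trans h1 (max_le ?_ ?_)
        · have h3 : 0 ≤ η ^ θ * B k := mul_nonneg hηθ0.le (hB0 k).le
          linarith
        · have h2 : η ^ θ * A k ≤ η ^ θ * B k := mul_le_mul_of_nonneg_left ih hηθ0.le
          have h4 := hωk k
          linarith
    have hAsum : Summable A := Summable.of_nonneg_of_le (fun m => (hApos m).le) hAB hBsum
    refine ⟨hAsum, ?_⟩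
    set d : ℕ → ℝ := fun k => a (k+1) - a k with hd
    have hdle : ∀ k, |d k| ≤ C * A k := by
      intro k
      have := hInc (k+1) (by omega)
      simpa [hd] using this
    have hCA : Summable (fun k => C * A k) := hAsum.mul_left C
    have hdnorm : Summable (fun k => |d k|) :=
      Summable.of_nonneg_of_le (fun k => abs_nonneg _) hdle hCA
    have hdsum : Summable d := by
      apply Summable.of_norm
      simpa [Real.norm_eq_abs] using hdnorm
    set l : ℝ := ∑' k, d k with hl
    have hal : ∀ m, a m = ∑ k ∈ Finset.range m, d k := by
      intro m
      induction m with
      | zero => simpa using ha0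
      | succ k ih => rw [Finset.sum_range_succ, ← ih]; simp [hd]
    have hconv : Tendsto a atTop (nhds l) := by
      have h1 := hdsum.hasSum.tendsto_sum_nat
      apply h1.congr
      intro m
      exact (hal m).symm
    have hTail : ∀ m, |a m - l| ≤ C * T m := by
      intro m
      have h1 := Summable.sum_add_tsum_nat_add m hdsum
      have h2 : a m - l = -∑' i, d (i + m) := by
        rw [hal m, hl, ← h1]; ring
      rw [h2, abs_neg]
      have hsh : Summable (fun i => d (i + m)) := (summable_nat_add_iff m).2 hdsum
      have hshabs : Summable (fun i => |d (i + m)|) := (summable_nat_add_iff m).2 hdnorm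
      have hshB : Summable (fun i => C * B (m + i)) := (hTsummable m).mul_left C
      calc |∑' i, d (i + m)| ≤ ∑' i, |d (i + m)| := by
            rw [← Real.norm_eq_abs]
            refine (norm_tsum_le_tsum_norm ?_).trans_eq ?_
            · exact hshabs.congr (fun i => (Real.norm_eq_abs _).symm)
            · exact tsum_congr fun i => Real.norm_eq_abs _
        _ ≤ ∑' i, C * B (m + i) := by
            apply Summable.tsum_le_tsum _ hshabs hshB
            intro i
            refine le_trans (hdle (i + m)) ?_
            have h3 : A (i + m) ≤ B (m + i) := by rw [Nat.add_comm m i]; exact hAB (i + m)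
            exact mul_le_mul_of_nonneg_left h3 hC.le
        _ = C * T m := by rw [tsum_mul_left]
    have hlbound : |l| ≤ C * ∑' m, A m := by
      have h1 : |l| ≤ ∑' k, |d k| := by
        rw [hl, ← Real.norm_eq_abs]
        refine (norm_tsum_le_tsum_norm ?_).trans_eq ?_
        · exact hdnorm.congr (fun i => (Real.norm_eq_abs _).symm)
        · exact tsum_congr fun i => Real.norm_eq_abs _
      have h2 : ∑' k, |d k| ≤ ∑' k, C * A k := Summable.tsum_le_tsum hdle hdnorm hCA
      rw [tsum_mul_left] at h2
      linarith
    refine ⟨l, hconv, hlbound, ?_⟩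
    intro x hx
    by_cases hx0 : x = 0
    · subst hx0
      have hzero : ∀ i, (0 : EuclideanSpace ℝ (Fin (n+1))) i = 0 := fun i => rfl
      simp only [hzero, norm_zero, mul_zero, zero_mul, sub_zero]
      have hub : ∀ m : ℕ, 1 ≤ m → |u 0| ≤ η ^ m * T 0 := by
        intro m hm
        have h1 := hu m hm 0 ⟨hx.1, mem_ball_self (pow_pos hη m)⟩
        simp only [hzero, mul_zero, sub_zero] at h1
        refine h1.trans ?_
        apply mul_le_mul_of_nonneg_left _ (pow_pos hη m).le
        exact le_trans (hAB m) (le_trans (hBT m) (hTanti (Nat.zero_le m)))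
      have htend : Tendsto (fun m : ℕ => η ^ m * T 0) atTop (nhds 0) := by
        have := (tendsto_pow_atTop_nhds_zero_of_lt_one hη.le hη1).mul_const (T 0)
        simpa using this
      exact ge_of_tendsto htend (eventually_atTop.2 ⟨1, fun m hm => hub m hm⟩)
    · have hxnorm : 0 < ‖x‖ := norm_pos_iff.2 hx0
      set r := ‖x‖ with hr
      have hrlt : r < η ^ 2 := by
        have := hx.2
        rwa [mem_ball, dist_zero_right] at this
      have hlogη : Real.log η < 0 := Real.log_neg hη hη1
      have hratio : 2 < Real.log r / Real.log η := by
        rw [lt_div_iff_of_neg hlogη]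
        have h1 : Real.log r < Real.log (η ^ 2) := Real.log_lt_log hxnorm hrlt
        rw [Real.log_pow] at h1
        push_cast at h1 ⊢
        linarith
      set m := ⌊Real.log r / Real.log η⌋₊ with hm
      have hm2 : 2 ≤ m := Nat.le_floor (by exact_mod_cast hratio.le)
      set ν := m - 1 with hν
      have hν1 : 1 ≤ ν := by omega
      have hmν : m = ν + 1 := by omega
      have hfl : (m : ℝ) ≤ Real.log r / Real.log η := Nat.floor_le (by linarith)
      have hrm : r ≤ η ^ m := by
        rw [le_div_iff_of_neg hlogη] at hfl
        have h2 : Real.log r ≤ Real.log (η ^ m) := by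
          rw [Real.log_pow]; push_cast; linarith
        exact (Real.log_le_log_iff hxnorm (pow_pos hη m)).1 h2
      have hrm1 : η ^ (m+1) < r := by
        have h1 : Real.log r / Real.log η < (m : ℝ) + 1 := Nat.lt_floor_add_one _
        rw [div_lt_iff_of_neg hlogη] at h1
        have h2 : Real.log (η ^ (m+1)) < Real.log r := by
          rw [Real.log_pow]; push_cast; linarith
        exact (Real.log_lt_log_iff (pow_pos hη (m+1)) hxnorm).1 h2
      have hrν : r < η ^ ν := by
        calc r ≤ η ^ m := hrm
          _ < η ^ ν := by
            rw [hmν, pow_succ]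
            exact mul_lt_of_lt_one_right (pow_pos hη ν) hη1
      have hν2 : η ^ ν < r / η ^ 2 := by
        rw [lt_div_iff₀ (by positivity)]
        have h3 : ν + 2 = m + 1 := by omega
        rw [← pow_add, h3]
        exact hrm1
      have hxball : x ∈ ball (0 : EuclideanSpace ℝ (Fin (n+1))) (η ^ ν) := by
        rw [mem_ball, dist_zero_right]
        exact hrν
      have h1 := hu ν hν1 x ⟨hx.1, hxball⟩
      have hcoord : |x (Fin.last n)| ≤ r := abs_coord_le_norm' x _
      have h2 : |a ν - l| ≤ C * T ν := hTail ν
      have key : |u x - l * x (Fin.last n)|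
          ≤ η ^ ν * A ν + |a ν - l| * |x (Fin.last n)| := by
        have e0 : u x - l * x (Fin.last n)
            = (u x - a ν * x (Fin.last n)) + (a ν - l) * x (Fin.last n) := by ring
        rw [e0]
        refine (abs_add_le _ _).trans ?_
        rw [abs_mul]
        exact add_le_add h1 le_rfl
      have hAν : A ν ≤ T ν := le_trans (hAB ν) (hBT ν)
      have e1 : η ^ ν * A ν ≤ (r / η ^ 2) * T ν :=
        mul_le_mul hν2.le hAν (hApos ν).le (by positivity)
      have e2 : |a ν - l| * |x (Fin.last n)| ≤ (C * T ν) * r :=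
        mul_le_mul h2 hcoord (abs_nonneg _) (mul_nonneg hC.le (hT0 ν))
      have e3 : (r / η ^ 2) * T ν + (C * T ν) * r = r * (((η ^ 2)⁻¹ + C) * T ν) := by
        field_simp
      show |u x - l * x (Fin.last n)| ≤ r * (((η ^ 2)⁻¹ + C) * T ν)
      linarith
end
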